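/- arXiv:1006.4479 — 2 statements merged into one kernel-verified Lean document; each statement's English description precedes it below -/
import Mathlib

section
/- In a finite distributive lattice with least element 0, every element a equals the join of all join-prime elements below it (where the empty join is 0). -/
open scoped Classical

/-- In a finite distributive lattice with least element, every element is the
join of the join-prime elements below it (empty join being the bottom). -/
theorem eq_sup_supPrime_le {L : Type*} [DistribLattice L] [Fintype L] [OrderBot L]
    (a : L) : a = (Finset.univ.filter fun p : L => SupPrime p ∧ p ≤ a).sup id := by
  obtain ⟨s, hs, hirr⟩ := exists_supIrred_decomposition a
  apply le_antisymm
  · rw [← hs]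
    apply Finset.sup_le
    intro b hb
    apply Finset.le_sup (f := id)
    simp only [Finset.mem_filter, Finset.mem_univ, true_and]
    exact ⟨(hirr hb).supPrime, hs ▸ Finset.le_sup (f := id) hb⟩
  · exact Finset.sup_le fun b hb => (Finset.mem_filter.1 hb).2.2
end

section
/- Any two countable atomless Boolean algebras are isomorphic. -/
/-!
Back and forth. A finite partial map `aᵢ ↦ bᵢ` between Boolean algebras extends to an isomorphism
of the generated finite subalgebras exactly when each minterm `⨅ ±aᵢ` vanishes iff the corresponding
`⨅ ±bᵢ` does, and such a map preserves and reflects `≤`. To add a new point `a`, split each minterm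
`m` of the `bᵢ` into `c ≤ m` and `m \ c`, each vanishing iff `m' ⊓ a`, resp. `m' \ a`, does for
the corresponding minterm `m'` of the `aᵢ`; atomlessness provides `c` when both must be nonzero, and
`b := ⨆ c` works. Points can be added on either side by symmetry, and the Rasiowa–Sikorski lemma
yields an ideal of partial isomorphisms meeting all countably many requirements, whose union is an
order isomorphism.
-/

open Finset

theorem Finset.inf_sup_eq_of_pairwiseDisjoint {ι β : Type*} [DistribLattice β] [OrderBot β]
    {S : Finset ι} {q c : ι → β} (hq : (S : Set ι).PairwiseDisjoint q)
    (hc : ∀ i ∈ S, c i ≤ q i) {i : ι} (hi : i ∈ S) : q i ⊓ S.sup c = c i := by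
  rw [sup_inf_distrib_left]
  refine le_antisymm (Finset.sup_le fun j hj => ?_) (le_sup_of_le hi (le_inf (hc i hi) le_rfl))
  obtain rfl | hij := eq_or_ne i j
  · exact inf_le_right
  · exact ((hq hi hj hij).mono_right (hc j hj)).eq_bot.le.trans bot_le

theorem nonempty_orderIso_of_rel {α β : Type*} [PartialOrder α] [PartialOrder β]
    (R : α → β → Prop) (hα : ∀ a, ∃ b, R a b) (hβ : ∀ b, ∃ a, R a b)
    (hR : ∀ ⦃a a' b b'⦄, R a b → R a' b' → (a ≤ a' ↔ b ≤ b')) : Nonempty (α ≃o β) := by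
  choose f hf using hα
  choose g hg using hβ
  exact ⟨{ toFun := f, invFun := g
           left_inv a := le_antisymm ((hR (hg _) (hf a)).2 le_rfl) ((hR (hf a) (hg _)).2 le_rfl)
           right_inv b := le_antisymm ((hR (hf _) (hg b)).1 le_rfl) ((hR (hg b) (hf _)).1 le_rfl)
           map_rel_iff' {a a'} := (hR (hf a) (hf a')).symm }⟩

section Minterm

variable {ι α : Type*} [BooleanAlgebra α] [DecidableEq ι]

def minterm (f : ι → α) (s t : Finset ι) : α :=
  t.inf f ⊓ (s \ t).inf fun i => (f i)ᶜ

variable {f : ι → α} {s t : Finset ι} {i j : ι}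

theorem minterm_le_of_mem (ht : i ∈ t) : minterm f s t ≤ f i :=
  inf_le_left.trans (inf_le ht)

theorem minterm_le_compl (hs : i ∈ s) (ht : i ∉ t) : minterm f s t ≤ (f i)ᶜ :=
  inf_le_right.trans (inf_le (mem_sdiff.2 ⟨hs, ht⟩))

theorem pairwiseDisjoint_minterm (f : ι → α) (s : Finset ι) :
    (s.powerset : Set (Finset ι)).PairwiseDisjoint (minterm f s) := by
  intro t ht u hu htu
  simp only [coe_powerset, Set.mem_preimage, Set.mem_powerset_iff, coe_subset] at ht hu
  show Disjoint (minterm f s t) (minterm f s u)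
  wlog h : ¬ t ⊆ u generalizing t u
  · exact (this htu.symm hu ht fun hut => htu (subset_antisymm (not_not.1 h) hut)).symm
  obtain ⟨i, hit, hiu⟩ := not_subset.1 h
  exact disjoint_compl_right.mono (minterm_le_of_mem hit) (minterm_le_compl (ht hit) hiu)

theorem minterm_insert_of_notMem (hi : i ∉ t) :
    minterm f (insert i s) t = minterm f s t \ f i := by
  rw [minterm, minterm, insert_sdiff_of_notMem _ hi, inf_insert, sdiff_eq]
  ac_rfl

theorem minterm_insert_insert (hs : i ∉ s) :
    minterm f (insert i s) (insert i t) = minterm f s t ⊓ f i := by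
  rw [minterm, minterm, insert_sdiff_insert, sdiff_insert_of_notMem hs, inf_insert]
  ac_rfl

theorem sup_powerset_minterm (f : ι → α) (s : Finset ι) : s.powerset.sup (minterm f s) = ⊤ := by
  induction s using Finset.induction_on with
  | empty => simp [minterm]
  | insert i s hi ih =>
    have hnot : ∀ t ∈ s.powerset, i ∉ t := fun t ht hit => hi (mem_powerset.1 ht hit)
    rw [powerset_insert, sup_union, sup_image, sup_congr rfl fun t ht => minterm_insert_of_notMem
      (hnot t ht), Function.comp_def, sup_congr rfl fun t _ => minterm_insert_insert hi]
    simp only [sdiff_eq, ← sup_inf_distrib_right, ih, top_inf_eq, compl_sup_eq_top]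

theorem eq_bot_iff_forall_inf_minterm {x : α} :
    x = ⊥ ↔ ∀ t ⊆ s, x ⊓ minterm f s t = ⊥ := by
  refine ⟨fun hx t _ => by rw [hx, bot_inf_eq], fun h => ?_⟩
  rw [← inf_top_eq x, ← sup_powerset_minterm f s, sup_inf_distrib_left, Finset.sup_eq_bot_iff]
  exact fun t ht => h t (mem_powerset.1 ht)

theorem le_iff_forall_minterm_eq_bot (hi : i ∈ s) (hj : j ∈ s) :
    f i ≤ f j ↔ ∀ t ⊆ s, i ∈ t → j ∉ t → minterm f s t = ⊥ := by
  refine ⟨fun hij t _ hit hjt => ?_, fun h => ?_⟩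
  · exact (disjoint_compl_right.mono ((minterm_le_of_mem hit).trans hij)
      (minterm_le_compl hj hjt)).eq_bot_of_le le_rfl
  rw [← sdiff_eq_bot_iff, eq_bot_iff_forall_inf_minterm (f := f) (s := s)]
  intro t ht
  by_cases hit : i ∈ t
  · by_cases hjt : j ∈ t
    · exact (Disjoint.mono_right (minterm_le_of_mem hjt) disjoint_sdiff_self_left).eq_bot
    · rw [h t ht hit hjt, inf_bot_eq]
  · exact (disjoint_compl_right.mono sdiff_le (minterm_le_compl hi hit)).eq_bot

end Minterm

theorem exists_le_inf_eq_bot_iff_and_sdiff_eq_bot_iff {α β : Type*} [BooleanAlgebra α]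
    [BooleanAlgebra β] (hβ : ∀ b : β, ¬ IsAtom b) {p : α} {q : β} (hpq : p = ⊥ ↔ q = ⊥) (a : α) :
    ∃ c ≤ q, (p ⊓ a = ⊥ ↔ c = ⊥) ∧ (p \ a = ⊥ ↔ q \ c = ⊥) := by
  by_cases hpa : p ⊓ a = ⊥
  · refine ⟨⊥, bot_le, by simp [hpa], ?_⟩
    rwa [(disjoint_iff.2 hpa).sdiff_eq_left, sdiff_bot]
  by_cases hpa' : p \ a = ⊥
  · refine ⟨q, le_rfl, ?_, by simp [hpa']⟩
    rwa [inf_eq_left.2 (sdiff_eq_bot_iff.1 hpa')]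
  have hq : q ≠ ⊥ := fun hq => hpa (by rw [hpq.2 hq, bot_inf_eq])
  obtain ⟨c, hcq, hc⟩ : ∃ c < q, c ≠ ⊥ := by simpa [IsAtom, hq] using hβ q
  exact ⟨c, hcq.le, iff_of_false hpa hc,
    iff_of_false hpa' fun h => hcq.not_ge (sdiff_eq_bot_iff.1 h)⟩

section PartialIso

open scoped Classical

variable {α β : Type*} [BooleanAlgebra α] [BooleanAlgebra β]

def IsPartialIso (s : Finset (α × β)) : Prop :=
  ∀ t ⊆ s, minterm Prod.fst s t = ⊥ ↔ minterm Prod.snd s t = ⊥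

theorem isPartialIso_empty [Nontrivial α] [Nontrivial β] : IsPartialIso (∅ : Finset (α × β)) := by
  intro t ht
  simp [subset_empty.1 ht, minterm]

theorem isPartialIso_insert {s : Finset (α × β)} {a : α} {b : β} (hab : (a, b) ∉ s)
    (h : ∀ t ⊆ s, (minterm Prod.fst s t ⊓ a = ⊥ ↔ minterm Prod.snd s t ⊓ b = ⊥) ∧
      (minterm Prod.fst s t \ a = ⊥ ↔ minterm Prod.snd s t \ b = ⊥)) :
    IsPartialIso (insert (a, b) s) := by
  intro t ht
  by_cases hmem : (a, b) ∈ t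
  · rw [← insert_erase hmem, minterm_insert_insert hab, minterm_insert_insert hab]
    exact (h _ (subset_insert_iff.1 ht)).1
  · rw [minterm_insert_of_notMem hmem, minterm_insert_of_notMem hmem]
    exact (h _ ((subset_insert_iff_of_notMem hmem).1 ht)).2

namespace IsPartialIso

variable {s : Finset (α × β)}

theorem le_iff (hs : IsPartialIso s) {a a' : α} {b b' : β} (h : (a, b) ∈ s) (h' : (a', b') ∈ s) :
    a ≤ a' ↔ b ≤ b' :=
  (le_iff_forall_minterm_eq_bot (f := Prod.fst) h h').trans <|
    (forall₂_congr fun t ht => by rw [hs t ht]).trans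
      (le_iff_forall_minterm_eq_bot (f := Prod.snd) h h').symm

theorem map_prodComm (hs : IsPartialIso s) :
    IsPartialIso (s.map (Equiv.prodComm α β).toEmbedding) := by
  intro t ht
  obtain ⟨u, hu, rfl⟩ := subset_map_iff.1 ht
  simp only [minterm, ← Finset.map_sdiff, inf_map]
  exact (hs u hu).symm

theorem exists_insert (hβ : ∀ b : β, ¬ IsAtom b) (hs : IsPartialIso s) (a : α) :
    ∃ b : β, IsPartialIso (insert (a, b) s) := by
  by_cases hmem : ∃ b, (a, b) ∈ s
  · obtain ⟨b, hb⟩ := hmem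
    exact ⟨b, by rwa [insert_eq_of_mem hb]⟩
  have hsplit : ∀ t ∈ s.powerset, ∃ c ≤ minterm Prod.snd s t,
      (minterm Prod.fst s t ⊓ a = ⊥ ↔ c = ⊥) ∧
      (minterm Prod.fst s t \ a = ⊥ ↔ minterm Prod.snd s t \ c = ⊥) := fun t ht =>
    exists_le_inf_eq_bot_iff_and_sdiff_eq_bot_iff hβ (hs t (mem_powerset.1 ht)) a
  choose! c hcle hc using hsplit
  refine ⟨s.powerset.sup c, isPartialIso_insert (not_exists.1 hmem _) fun t ht => ?_⟩
  have hinf : minterm Prod.snd s t ⊓ s.powerset.sup c = c t :=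
    inf_sup_eq_of_pairwiseDisjoint (pairwiseDisjoint_minterm _ _) hcle (mem_powerset.2 ht)
  rw [← sdiff_inf_self_left (minterm Prod.snd s t), hinf]
  exact hc t (mem_powerset.2 ht)

end IsPartialIso

variable (α β) in
def PartialIso : Type _ :=
  {s : Finset (α × β) // IsPartialIso s}

namespace PartialIso

instance : Preorder (PartialIso α β) := Subtype.preorder _

instance [Nontrivial α] [Nontrivial β] : Inhabited (PartialIso α β) := ⟨⟨∅, isPartialIso_empty⟩⟩

protected def comm (f : PartialIso α β) : PartialIso β α :=
  ⟨f.val.map (Equiv.prodComm α β).toEmbedding, f.prop.map_prodComm⟩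

def definedAtLeft (hβ : ∀ b : β, ¬ IsAtom b) (a : α) : Order.Cofinal (PartialIso α β) where
  carrier := {f | ∃ b, (a, b) ∈ f.val}
  isCofinal f :=
    let ⟨b, hb⟩ := f.prop.exists_insert hβ a
    ⟨⟨_, hb⟩, ⟨b, mem_insert_self _ _⟩, subset_insert _ _⟩

def definedAtRight (hα : ∀ a : α, ¬ IsAtom a) (b : β) : Order.Cofinal (PartialIso α β) where
  carrier := {f | ∃ a, (a, b) ∈ f.val}
  isCofinal f := by
    obtain ⟨g, hg, hfg⟩ := (definedAtLeft hα b).isCofinal f.comm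
    obtain ⟨a, ha⟩ : ∃ a, (b, a) ∈ g.val := hg
    refine ⟨g.comm, ⟨a, mem_map_equiv.2 ha⟩, fun p hp => ?_⟩
    exact mem_map_equiv.2 (hfg (mem_map_equiv.2 (by simpa using hp)))

end PartialIso

end PartialIso

/-- Any two countable atomless Boolean algebras are isomorphic. -/
theorem countable_atomless_boolean_algebras_iso {A B : Type*}
    [BooleanAlgebra A] [BooleanAlgebra B]
    [Countable A] [Infinite A] [Countable B] [Infinite B]
    (hA : ∀ a : A, ¬ IsAtom a) (hB : ∀ b : B, ¬ IsAtom b) :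
    Nonempty (A ≃o B) := by
  obtain ⟨_⟩ := nonempty_encodable (A ⊕ B)
  let D := Sum.elim (PartialIso.definedAtLeft hB) (PartialIso.definedAtRight hA)
  let I := Order.idealOfCofinals default D
  refine nonempty_orderIso_of_rel (fun a b => ∃ f ∈ I, (a, b) ∈ f.val) (fun a => ?_)
    (fun b => ?_) ?_
  · obtain ⟨f, hfD, hf⟩ := Order.cofinal_meets_idealOfCofinals default D (.inl a)
    obtain ⟨b, hb⟩ : ∃ b, (a, b) ∈ f.val := hfD
    exact ⟨b, f, hf, hb⟩
  · obtain ⟨f, hfD, hf⟩ := Order.cofinal_meets_idealOfCofinals default D (.inr b)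
    obtain ⟨a, ha⟩ : ∃ a, (a, b) ∈ f.val := hfD
    exact ⟨a, f, hf, ha⟩
  · rintro a a' b b' ⟨f, hf, hab⟩ ⟨f', hf', hab'⟩
    obtain ⟨g, -, hfg, hf'g⟩ := I.directed f hf f' hf'
    exact g.prop.le_iff (hfg hab) (hf'g hab')
end
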